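/- If λ ∈ Γ_k, then for each index i = 1,...,n one has S_{k-1}(λ)|_{λ_i = 0} ≥ 0; that is, all partial derivatives of S_k are nonnegative on the cone Γ_k. -/

import Mathlib

open Finset Polynomial

/-- The `k`-th elementary symmetric polynomial of `l : Fin n → ℝ`. -/
noncomputable def esymmS (n k : ℕ) (l : Fin n → ℝ) : ℝ :=
  ∑ A ∈ Finset.powersetCard k (Finset.univ : Finset (Fin n)), ∏ i ∈ A, l i

/-!
Write `λ|i` for `λ` with the `i`-th coordinate removed, and argue by induction on `k`, over an
arbitrary finite index set. Suppose `S_p(λ|i) ≥ 0` for `p ≤ m` but `S_{m+1}(λ|i) < 0`. Shifting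
every coordinate by `t > 0` turns each `S_p` into a nonnegative combination of the `S_q(λ)`, `q ≤ p`,
whose `q = 0` term is positive. So by the intermediate value theorem some `t > 0` gives
`S_{m+1}((λ+t)|i) = 0`, while `S_m((λ+t)|i) > 0` and `S_{m+2}(λ+t) > 0`. Then the vector `μ`
obtained from `λ + t` by setting its `i`-th coordinate to `0` has `S_{m+2}(μ) = S_{m+2}(λ+t) > 0`,
`S_{m+1}(μ) = 0` and `S_m(μ) > 0`, against Newton's inequality `S_{m+2} S_m ≤ c S_{m+1}^2`.
Newton's inequality is Laguerre's `f'' f ≤ f'^2` at `0` for a derivative of `∏ (X + λ_j)`, which has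
only real roots by Rolle's theorem.
-/

namespace Polynomial

theorem Splits.derivative_of_real {p : ℝ[X]} (hp : p.Splits) : (derivative p).Splits := by
  rw [splits_iff_card_roots] at hp ⊢
  have := p.card_roots_le_derivative
  have := (derivative p).card_roots'
  have := p.natDegree_derivative_le
  omega

theorem Splits.iterate_derivative_of_real {p : ℝ[X]} (hp : p.Splits) (m : ℕ) :
    (derivative^[m] p).Splits := by
  induction m with
  | zero => exact hp
  | succ m ih => rw [Function.iterate_succ_apply']; exact ih.derivative_of_real

theorem eval_derivative_derivative_mul_eval_le_X_sub_C_mul {p : ℝ[X]} {x : ℝ}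
    (hp : eval x (derivative (derivative p)) * eval x p ≤ eval x (derivative p) ^ 2) (r : ℝ) :
    eval x (derivative (derivative ((X - C r) * p))) * eval x ((X - C r) * p) ≤
      eval x (derivative ((X - C r) * p)) ^ 2 := by
  simp only [derivative_mul, derivative_sub, derivative_X, derivative_C, sub_zero, one_mul,
    derivative_add, eval_add, eval_mul, eval_sub, eval_X, eval_C]
  nlinarith [mul_le_mul_of_nonneg_left hp (sq_nonneg (x - r)), sq_nonneg (eval x p)]

theorem Splits.eval_derivative_derivative_mul_eval_le {f : ℝ[X]} (hf : f.Splits) (x : ℝ) :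
    eval x (derivative (derivative f)) * eval x f ≤ eval x (derivative f) ^ 2 := by
  rw [hf.eq_prod_roots]
  induction f.roots using Multiset.induction_on with
  | empty => simp
  | cons r M ih =>
    rw [Multiset.map_cons, Multiset.prod_cons, mul_left_comm]
    exact eval_derivative_derivative_mul_eval_le_X_sub_C_mul ih r

end Polynomial

section

variable {ι : Type*}

noncomputable def esymmOn (s : Finset ι) (m : ℕ) (v : ι → ℝ) : ℝ :=
  ∑ A ∈ s.powersetCard m, ∏ j ∈ A, v j

theorem esymmS_eq_esymmOn (n m : ℕ) (v : Fin n → ℝ) : esymmS n m v = esymmOn univ m v := rfl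

@[simp]
theorem esymmOn_zero (s : Finset ι) (v : ι → ℝ) : esymmOn s 0 v = 1 := by
  simp [esymmOn]

theorem esymmOn_congr {s : Finset ι} {v w : ι → ℝ} (h : ∀ j ∈ s, v j = w j) (m : ℕ) :
    esymmOn s m v = esymmOn s m w :=
  sum_congr rfl fun _ hA => prod_congr rfl fun j hj => h j ((mem_powersetCard.1 hA).1 hj)

theorem esymmOn_newton {s : Finset ι} {j : ℕ} (hj : j + 2 ≤ #s) (v : ι → ℝ) :
    ((#s - j : ℕ) : ℝ) * esymmOn s (j + 2) v * esymmOn s j v ≤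
      ((#s - j - 1 : ℕ) : ℝ) * esymmOn s (j + 1) v ^ 2 := by
  set r := #s - (j + 2)
  set P : ℝ[X] := ∏ i ∈ s, (X + C (v i))
  have hP : P.Splits := Splits.prod fun i _ => Splits.X_add_C (v i)
  set Q := derivative^[r] P
  have hQ (l : ℕ) (hl : l ≤ 2) :
      Q.coeff l = ((l + r).descFactorial r : ℝ) * esymmOn s (j + 2 - l) v := by
    rw [coeff_iterate_derivative, Finset.prod_X_add_C_coeff s v (by omega), nsmul_eq_mul,
      show #s - (l + r) = j + 2 - l by omega]
    rfl
  have hdesc (l : ℕ) : (l.factorial : ℝ) * (l + r).descFactorial r = (l + r).factorial := by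
    exact_mod_cast Nat.add_sub_cancel l r ▸ Nat.factorial_mul_descFactorial (Nat.le_add_left r l)
  -- `Q.coeff l = (l + r)! / l! * S_{j+2-l}`, so Laguerre's inequality `2 Q₂ Q₀ ≤ Q₁²` at `0` is
  -- the claim multiplied by `(r + 1) * (r !)²`.
  have hlaguerre := (hP.iterate_derivative_of_real r).eval_derivative_derivative_mul_eval_le 0
  rw [← coeff_zero_eq_eval_zero, ← coeff_zero_eq_eval_zero, ← coeff_zero_eq_eval_zero,
    coeff_derivative, coeff_derivative, coeff_derivative] at hlaguerre
  rw [hQ 0 (by norm_num), hQ 1 (by norm_num), hQ 2 (by norm_num)] at hlaguerre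
  have hd1 : ((1 + r).descFactorial r : ℝ) = (r + 1) * r.factorial := by
    simpa [add_comm 1 r, Nat.factorial_succ] using hdesc 1
  have hd2 : 2 * ((2 + r).descFactorial r : ℝ) = (r + 2) * ((r + 1) * r.factorial) := by
    simpa [add_comm 2 r, Nat.factorial_succ, Nat.factorial, add_assoc, one_add_one_eq_two]
      using hdesc 2
  norm_num [hd1, Nat.descFactorial_self] at hlaguerre
  rw [show #s - j - 1 = r + 1 by omega, show #s - j = r + 2 by omega]
  push_cast
  have hF : (0 : ℝ) < (r + 1) * r.factorial ^ 2 := by positivity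
  refine le_of_mul_le_mul_left ?_ hF
  linear_combination hlaguerre - r.factorial * esymmOn s j v * esymmOn s (j + 2) v * hd2

variable [DecidableEq ι]

theorem esymmOn_insert {s : Finset ι} {a : ι} (ha : a ∉ s) (m : ℕ) (v : ι → ℝ) :
    esymmOn (insert a s) (m + 1) v = esymmOn s (m + 1) v + v a * esymmOn s m v := by
  have hinj : Set.InjOn (insert a) (s.powersetCard m : Set (Finset ι)) := fun A hA B hB hAB => by
    rw [← erase_insert (notMem_mono (mem_powersetCard.1 hA).1 ha),
      ← erase_insert (notMem_mono (mem_powersetCard.1 hB).1 ha), hAB]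
  rw [esymmOn, powersetCard_succ_insert ha, sum_union, sum_image hinj, esymmOn, esymmOn, mul_sum]
  · refine congrArg _ (sum_congr rfl fun A hA => prod_insert ?_)
    exact notMem_mono (mem_powersetCard.1 hA).1 ha
  · rw [disjoint_left]
    rintro _ hA hA'
    obtain ⟨B, -, rfl⟩ := mem_image.1 hA'
    exact ha ((mem_powersetCard.1 hA).1 (mem_insert_self a B))

theorem esymmOn_succ_eq_erase {s : Finset ι} {i : ι} (hi : i ∈ s) (m : ℕ) (v : ι → ℝ) :
    esymmOn s (m + 1) v = esymmOn (s.erase i) (m + 1) v + v i * esymmOn (s.erase i) m v := by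
  rw [← esymmOn_insert (notMem_erase i s), insert_erase hi]

theorem esymmOn_update_zero {s : Finset ι} {i : ι} (hi : i ∈ s) (m : ℕ) (v : ι → ℝ) :
    esymmOn s m (Function.update v i 0) = esymmOn (s.erase i) m v := by
  cases m with
  | zero => simp
  | succ m =>
    rw [esymmOn_succ_eq_erase hi, Function.update_self, zero_mul, add_zero]
    exact esymmOn_congr (fun j hj => Function.update_of_ne (ne_of_mem_erase hj) _ _) _

theorem esymmOn_add_const {s : Finset ι} {m : ℕ} (hm : m ≤ #s) (v : ι → ℝ) (t : ℝ) :
    esymmOn s m (fun j => v j + t) =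
      ∑ p ∈ range (m + 1), ((#s - p).choose (m - p) : ℝ) * t ^ (m - p) * esymmOn s p v := by
  calc esymmOn s m (fun j => v j + t)
      = ∑ A ∈ s.powersetCard m, ∑ B ∈ A.powerset, t ^ (m - #B) * ∏ j ∈ B, v j := by
        refine sum_congr rfl fun A hA => ?_
        rw [prod_add]
        refine sum_congr rfl fun B hB => ?_
        rw [prod_const, card_sdiff_of_subset (mem_powerset.1 hB), (mem_powersetCard.1 hA).2,
          mul_comm]
    _ = ∑ B ∈ s.powerset, ∑ A ∈ s.powersetCard m with B ⊆ A, t ^ (m - #B) * ∏ j ∈ B, v j := by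
        refine sum_comm' fun A B => ?_
        simp only [mem_powerset, mem_filter, mem_powersetCard]
        exact ⟨fun ⟨hA, hBA⟩ => ⟨⟨hA, hBA⟩, hBA.trans hA.1⟩, fun ⟨h, _⟩ => h⟩
    _ = ∑ p ∈ range (#s + 1), ∑ B ∈ s.powersetCard p,
          #{A ∈ s.powersetCard m | B ⊆ A} * (t ^ (m - p) * ∏ j ∈ B, v j) := by
        rw [sum_powerset]
        refine sum_congr rfl fun p _ => sum_congr rfl fun B hB => ?_
        rw [sum_const, nsmul_eq_mul, (mem_powersetCard.1 hB).2]
    _ = ∑ p ∈ range (m + 1), ((#s - p).choose (m - p) : ℝ) * t ^ (m - p) * esymmOn s p v := by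
        rw [← sum_range_add_sum_Ico _ (by omega : m + 1 ≤ #s + 1),
          sum_eq_zero (s := Ico (m + 1) (#s + 1)), add_zero]
        · refine sum_congr rfl fun p hp => ?_
          rw [esymmOn, mul_sum]
          refine sum_congr rfl fun B hB => ?_
          obtain ⟨hBs, rfl⟩ := mem_powersetCard.1 hB
          rw [card_filter_powersetCard_subset B s m hBs (by simpa [Nat.lt_succ_iff] using hp)]
          ring
        · intro p hp
          refine sum_eq_zero fun B hB => ?_
          have hmB : m < #B := by rw [(mem_powersetCard.1 hB).2]; exact (mem_Ico.1 hp).1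
          rw [card_eq_zero.2, Nat.cast_zero, zero_mul]
          exact filter_eq_empty_iff.2 fun A hA hBA =>
            hmB.not_ge ((card_le_card hBA).trans (mem_powersetCard.1 hA).2.le)

theorem esymmOn_add_const_pos {s : Finset ι} {m : ℕ} (hm : m ≤ #s) {v : ι → ℝ}
    (hv : ∀ p ≤ m, 0 ≤ esymmOn s p v) {t : ℝ} (ht : 0 < t) :
    0 < esymmOn s m (fun j => v j + t) := by
  rw [esymmOn_add_const hm]
  refine sum_pos' (fun p hp => ?_) ⟨0, by simp, ?_⟩
  · have := hv p (Nat.lt_succ_iff.1 (mem_range.1 hp))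
    positivity
  · have := Nat.choose_pos (n := #s) hm
    simp only [Nat.sub_zero, esymmOn_zero, mul_one]
    positivity

theorem esymmOn_add_const_ge {s : Finset ι} {m : ℕ} (hm : m + 1 ≤ #s) {v : ι → ℝ}
    (hv : ∀ p ≤ m, 0 ≤ esymmOn s p v) {t : ℝ} (ht : 0 ≤ t) :
    ((#s).choose (m + 1) : ℝ) * t ^ (m + 1) + esymmOn s (m + 1) v ≤
      esymmOn s (m + 1) (fun j => v j + t) := by
  rw [esymmOn_add_const hm, sum_range_succ, sum_range_succ']
  simp only [Nat.sub_zero, Nat.sub_self, esymmOn_zero, Nat.choose_zero_right, Nat.cast_one,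
    pow_zero, mul_one, one_mul]
  have hmiddle : 0 ≤ ∑ p ∈ range m,
      ((#s - (p + 1)).choose (m + 1 - (p + 1)) : ℝ) * t ^ (m + 1 - (p + 1)) *
        esymmOn s (p + 1) v :=
    sum_nonneg fun p hp => by
      have := hv (p + 1) (mem_range.1 hp)
      positivity
  linarith

theorem exists_pos_esymmOn_add_const_eq_zero {s : Finset ι} {m : ℕ} (hm : m + 1 ≤ #s)
    {v : ι → ℝ} (hv : ∀ p ≤ m, 0 ≤ esymmOn s p v) (hneg : esymmOn s (m + 1) v < 0) :
    ∃ t > 0, esymmOn s (m + 1) (fun j => v j + t) = 0 := by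
  set c := esymmOn s (m + 1) v
  set G : ℝ → ℝ := fun t => esymmOn s (m + 1) (fun j => v j + t)
  have hG0 : G 0 = c := by simp only [G, c, add_zero]
  have hGcont : Continuous G := by simp only [G, esymmOn]; fun_prop
  have hGpos : 0 < G (1 - c) := by
    have hchoose : (1 : ℝ) ≤ (#s).choose (m + 1) := by exact_mod_cast Nat.choose_pos hm
    have hpow : 1 - c ≤ (1 - c) ^ (m + 1) := le_self_pow₀ (by linarith) (by omega)
    have := esymmOn_add_const_ge hm hv (t := 1 - c) (by linarith)
    nlinarith
  obtain ⟨t, ⟨ht, -⟩, hGt⟩ := intermediate_value_Icc (by linarith : (0 : ℝ) ≤ 1 - c)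
    hGcont.continuousOn ⟨hG0 ▸ hneg.le, hGpos.le⟩
  refine ⟨t, ht.lt_of_ne ?_, hGt⟩
  rintro rfl
  exact hneg.ne (hG0 ▸ hGt)

theorem esymmOn_add_two_nonpos {s : Finset ι} {i : ι} (hi : i ∈ s) {m : ℕ} (hm : m + 2 ≤ #s)
    {w : ι → ℝ} (hzero : esymmOn (s.erase i) (m + 1) w = 0)
    (hpos : 0 < esymmOn (s.erase i) m w) : esymmOn s (m + 2) w ≤ 0 := by
  have hupdate (p : ℕ) := esymmOn_update_zero hi p w
  have hnewton := esymmOn_newton hm (Function.update w i 0)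
  rw [hupdate, hupdate, hupdate, hzero, zero_pow two_ne_zero, mul_zero] at hnewton
  have hcard : (0 : ℝ) < (#s - m : ℕ) := by exact_mod_cast (by omega : 0 < #s - m)
  rw [esymmOn_succ_eq_erase hi, hzero, mul_zero, add_zero]
  by_contra! htop
  exact hnewton.not_gt (mul_pos (mul_pos hcard htop) hpos)

theorem esymmOn_erase_succ_nonneg {s : Finset ι} {i : ι} (hi : i ∈ s) {m : ℕ}
    (hm : m + 2 ≤ #s) {v : ι → ℝ} (hv : ∀ p ≤ m + 2, 0 ≤ esymmOn s p v)
    (herase : ∀ p ≤ m, 0 ≤ esymmOn (s.erase i) p v) : 0 ≤ esymmOn (s.erase i) (m + 1) v := by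
  have hcard : #(s.erase i) = #s - 1 := card_erase_of_mem hi
  by_contra! hneg
  obtain ⟨t, ht, hzero⟩ := exists_pos_esymmOn_add_const_eq_zero (by omega) herase hneg
  have hpos := esymmOn_add_const_pos (by omega) herase ht
  exact (esymmOn_add_const_pos hm hv ht).not_ge (esymmOn_add_two_nonpos hi hm hzero hpos)

theorem esymmOn_erase_nonneg {s : Finset ι} {i : ι} (hi : i ∈ s) {m : ℕ} (hm : m + 1 ≤ #s)
    {v : ι → ℝ} (hv : ∀ p ≤ m + 1, 0 ≤ esymmOn s p v) : ∀ p ≤ m, 0 ≤ esymmOn (s.erase i) p v := by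
  induction m with
  | zero => simp
  | succ m ih =>
    have herase := ih (by omega) fun p hp => hv p (by omega)
    intro p hp
    rcases hp.lt_or_eq with hp | rfl
    · exact herase p (by omega)
    · exact esymmOn_erase_succ_nonneg hi hm hv herase

end

theorem stmt7_general (n k : ℕ) (hkn : k ≤ n) (lam : Fin n → ℝ)
    (hlam : ∀ j, 1 ≤ j → j ≤ k → 0 ≤ esymmS n j lam) :
    ∀ i : Fin n, 0 ≤ esymmS n (k - 1) (Function.update lam i 0) := by
  intro i
  rw [esymmS_eq_esymmOn, esymmOn_update_zero (mem_univ i)]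
  rcases k with _ | m
  · simp
  · refine esymmOn_erase_nonneg (mem_univ i) (by simpa using hkn) (fun p hp => ?_) m le_rfl
    rcases p with _ | p
    · simp
    · exact hlam (p + 1) (by omega) hp

/-- If λ ∈ Γ_k then S_{k-1}(λ)|_{λ_i=0} ≥ 0 for each i. -/
theorem stmt7 (n k : ℕ) (hk1 : 1 ≤ k) (hkn : k ≤ n) (lam : Fin n → ℝ)
    (hlam : ∀ j, 1 ≤ j → j ≤ k → 0 ≤ esymmS n j lam) :
    ∀ i : Fin n, 0 ≤ esymmS n (k - 1) (Function.update lam i 0) :=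
  stmt7_general n k hkn lam hlam
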